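/- Let V ⊂ ℝⁿ \ {0} be a nonempty compact set. Then inf_{q ∈ ℝⁿ} sup_{x ∈ V} |q − x|/|x| < 1 if and only if 0 ∉ co(V), i.e., V is separated from the origin by a hyperplane. -/

import Mathlib

/-!
If some centre `q` satisfies `‖q - x‖ < ‖x‖` on `V`, i.e. `‖q‖² < 2⟪q, x⟫`, then `V` lies in an
open half-space missing `0`, and so does its convex hull. Conversely, if `0` is not in the
(compact) convex hull, its nearest point `p` satisfies `⟪p, x⟫ ≥ ‖p‖² > 0` on the hull, so
`q = p` works. By compactness of `V`, the pointwise strict inequality `‖q - x‖ / ‖x‖ < 1` is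
equivalent to the supremum being `< 1`.
-/

open Set
open scoped RealInnerProductSpace

/-- Carathéodory: the hull is a finite union of continuous images of
`stdSimplex ℝ (Fin k) × sᵏ` with `k ≤ finrank ℝ E + 1`. -/
theorem IsCompact.convexHull {E : Type*} [NormedAddCommGroup E] [NormedSpace ℝ E]
    [FiniteDimensional ℝ E] {s : Set E} (hs : IsCompact s) : IsCompact (_root_.convexHull ℝ s) := by
  have hcover : _root_.convexHull ℝ s = ⋃ k : Fin (Module.finrank ℝ E + 2),
      (fun p : (Fin k → ℝ) × (Fin k → E) => ∑ i, p.1 i • p.2 i) ''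
        (stdSimplex ℝ (Fin k) ×ˢ univ.pi fun _ => s) := by
    refine Subset.antisymm (fun x hx => ?_) (iUnion_subset fun k => ?_)
    · obtain ⟨ι, _, z, w, hzs, hai, hw0, hw1, rfl⟩ := eq_pos_convex_span_of_mem_convexHull hx
      have hcard : Fintype.card ι < Module.finrank ℝ E + 2 :=
        Nat.lt_succ_of_le (hai.card_le_finrank_succ.trans
          (Nat.succ_le_succ (Submodule.finrank_le _)))
      let e := (Fintype.equivFin ι).symm
      refine mem_iUnion.2 ⟨⟨_, hcard⟩, (w ∘ e, z ∘ e), ⟨⟨fun i => (hw0 _).le, ?_⟩,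
        fun i _ => hzs (mem_range_self _)⟩, ?_⟩
      · exact (e.sum_comp w).trans hw1
      · exact e.sum_comp fun i => w i • z i
    · rintro _ ⟨⟨w, z⟩, ⟨⟨hw0, hw1⟩, hz⟩, rfl⟩
      exact (convex_convexHull ℝ s).sum_mem (fun i _ => hw0 i) hw1
        fun i _ => subset_convexHull ℝ s (hz i (mem_univ i))
  rw [hcover]
  exact isCompact_iUnion fun k =>
    ((isCompact_stdSimplex ℝ _).prod (isCompact_univ_pi fun _ => hs)).image (by fun_prop)

section InnerProductSpace

variable {F : Type*} [NormedAddCommGroup F] [InnerProductSpace ℝ F]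

theorem norm_sub_lt_norm_iff_sq_lt_two_mul_inner {q x : F} :
    ‖q - x‖ < ‖x‖ ↔ ‖q‖ ^ 2 < 2 * ⟪q, x⟫ := by
  rw [← sq_lt_sq₀ (norm_nonneg _) (norm_nonneg _), norm_sub_sq_real]
  constructor <;> intro h <;> linarith

theorem zero_notMem_convexHull_of_forall_norm_sub_lt {V : Set F} {q : F}
    (hq : ∀ x ∈ V, ‖q - x‖ < ‖x‖) : (0 : F) ∉ convexHull ℝ V := by
  have hhalf : Convex ℝ {x : F | ‖q‖ ^ 2 < 2 * ⟪q, x⟫} :=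
    convex_halfSpace_gt ⟨fun x y => by simp only [inner_add_right]; ring,
      fun c x => by simp only [real_inner_smul_right, smul_eq_mul]; ring⟩ _
  intro h0
  have : ‖q‖ ^ 2 < 2 * ⟪q, (0 : F)⟫ :=
    convexHull_min (fun x hx => norm_sub_lt_norm_iff_sq_lt_two_mul_inner.1 (hq x hx)) hhalf h0
  rw [inner_zero_right, mul_zero] at this
  exact (sq_nonneg _).not_gt this

theorem exists_forall_norm_sub_lt_norm {K : Set F} (hK : Convex ℝ K) (hKc : IsComplete K)
    (hne : K.Nonempty) (h0 : (0 : F) ∉ K) : ∃ q, ∀ x ∈ K, ‖q - x‖ < ‖x‖ := by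
  obtain ⟨p, hpK, hp⟩ := exists_norm_eq_iInf_of_complete_convex hne hKc hK 0
  have hproj := (norm_eq_iInf_iff_real_inner_le_zero hK hpK).1 hp
  have hp0 : 0 < ‖p‖ := norm_pos_iff.2 fun h => h0 (h ▸ hpK)
  refine ⟨p, fun x hx => norm_sub_lt_norm_iff_sq_lt_two_mul_inner.2 ?_⟩
  have hx := hproj x hx
  rw [zero_sub, inner_neg_left, inner_sub_right, real_inner_self_eq_norm_sq] at hx
  nlinarith

end InnerProductSpace

theorem iSup_norm_sub_div_norm_lt_one_iff {E : Type*} [SeminormedAddCommGroup E] {V : Set E}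
    (hV : IsCompact V) (hne : V.Nonempty) (h0 : ∀ x ∈ V, ‖x‖ ≠ 0) (q : E) :
    (⨆ x : V, ‖q - (x : E)‖ / ‖(x : E)‖) < 1 ↔ ∀ x ∈ V, ‖q - x‖ < ‖x‖ := by
  have hcont : ContinuousOn (fun x => ‖q - x‖ / ‖x‖) V :=
    ContinuousOn.div (by fun_prop) (by fun_prop) h0
  rw [← sSup_image' (s := V) (f := fun x => ‖q - x‖ / ‖x‖), hV.sSup_lt_iff_of_continuous hne hcont]
  exact forall₂_congr fun x hx => div_lt_one ((norm_nonneg x).lt_of_ne' (h0 x hx))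

/-- the optimal radially weighted 1-center cost is `< 1` iff the compact
set `V` (not containing the origin) is separated from the origin by a hyperplane,
i.e. `0 ∉ co(V)`. -/
theorem stmt_8 {n : ℕ} (V : Set (EuclideanSpace ℝ (Fin n)))
    (hV : IsCompact V) (hne : V.Nonempty)
    (h0 : (0 : EuclideanSpace ℝ (Fin n)) ∉ V) :
    (⨅ q : EuclideanSpace ℝ (Fin n), ⨆ x : V,
        ‖q - (x : EuclideanSpace ℝ (Fin n))‖ / ‖(x : EuclideanSpace ℝ (Fin n))‖) < 1 ↔
      (0 : EuclideanSpace ℝ (Fin n)) ∉ convexHull ℝ V := by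
  have hbdd : BddBelow (range fun q : EuclideanSpace ℝ (Fin n) =>
      ⨆ x : V, ‖q - (x : EuclideanSpace ℝ (Fin n))‖ / ‖(x : EuclideanSpace ℝ (Fin n))‖) :=
    ⟨0, forall_mem_range.2 fun q => Real.iSup_nonneg fun x => by positivity⟩
  have hV0 : ∀ x ∈ V, ‖x‖ ≠ 0 := fun x hx => norm_ne_zero_iff.2 (ne_of_mem_of_not_mem hx h0)
  simp only [ciInf_lt_iff hbdd, iSup_norm_sub_div_norm_lt_one_iff hV hne hV0]
  constructor
  · rintro ⟨q, hq⟩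
    exact zero_notMem_convexHull_of_forall_norm_sub_lt hq
  · intro h
    obtain ⟨q, hq⟩ := exists_forall_norm_sub_lt_norm (convex_convexHull ℝ V)
      hV.convexHull.isComplete hne.convexHull h
    exact ⟨q, fun x hx => hq x (subset_convexHull ℝ V hx)⟩
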